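/- arXiv:0911.4833 — 5 statements merged into one kernel-verified Lean document; each statement's English description precedes it below -/
import Mathlib

section
/- Let T=(Q,Σ,→) be a finite transition system with a distinguished set Goal ⊆ Q of winning states, with Σ partitioned into controllable actions Σ_c and uncontrollable actions Σ_u. If ∼ is a bisimulation on Q compatible with Goal (i.e., q ∼ q' implies q ∈ Goal ↔ q' ∈ Goal), and q ∼ q', then there exists a winning strategy for the controller from q if and only if there exists a winning strategy from q'. -/
section

variable {Q A : Type*}

/-- `ValidRun step q l`: the list `l` of (action, state) pairs is a run of the
transition system `step` starting from `q`. -/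
def ValidRun (step : Q → A → Q → Prop) : Q → List (A × Q) → Prop
  | _, [] => True
  | q, (a, q') :: l => step q a q' ∧ ValidRun step q' l

/-- Last state of the run starting at `q` with steps `l`. -/
def lastState (q : Q) (l : List (A × Q)) : Q :=
  (l.getLast?.map Prod.snd).getD q

/-- A strategy (a partial function from finite runs from `q₀` to controllable actions)
proposing only enabled controllable actions. -/
def IsStrategy (step : Q → A → Q → Prop) (Sc : Set A) (q₀ : Q)
    (σ : List (A × Q) → Option A) : Prop :=
  ∀ l : List (A × Q), ValidRun step q₀ l → ∀ a, σ l = some a →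
    a ∈ Sc ∧ ∃ q', step (lastState q₀ l) a q'

/-- A finite run is compatible with a strategy: each action taken is either the
proposed controllable action or an uncontrollable one. -/
def FinCompatible (Su : Set A) (σ : List (A × Q) → Option A) (l : List (A × Q)) : Prop :=
  ∀ i : ℕ, ∀ h : i < l.length, σ (l.take i) = some (l.get ⟨i, h⟩).1 ∨ (l.get ⟨i, h⟩).1 ∈ Su

/-- An infinite compatible run from `q₀`. -/
def InfCompatible (step : Q → A → Q → Prop) (Su : Set A) (q₀ : Q)
    (σ : List (A × Q) → Option A) (ρ : ℕ → A × Q) : Prop :=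
  (∀ n : ℕ, step (lastState q₀ (List.ofFn (fun i : Fin n => ρ i))) (ρ n).1 (ρ n).2) ∧
  (∀ n : ℕ, σ (List.ofFn (fun i : Fin n => ρ i)) = some (ρ n).1 ∨ (ρ n).1 ∈ Su)

/-- The strategy `σ` is winning from `q₀`: every maximal finite compatible run and
every infinite compatible run visits `Goal`. -/
def WinningStrategy (step : Q → A → Q → Prop) (Su : Set A) (Goal : Set Q) (q₀ : Q)
    (σ : List (A × Q) → Option A) : Prop :=
  (∀ l : List (A × Q), ValidRun step q₀ l → FinCompatible Su σ l → σ l = none →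
      (q₀ ∈ Goal ∨ ∃ p ∈ l, p.2 ∈ Goal)) ∧
  (∀ ρ : ℕ → A × Q, InfCompatible step Su q₀ σ ρ → (q₀ ∈ Goal ∨ ∃ n, (ρ n).2 ∈ Goal))

/-! Along a bisimulation, a run from `q'` is matched step by step by a run from `q` with the same
actions and bisimilar states, and the matching run of a prefix is a prefix of the matching run.
From `q'` the controller plays what a winning strategy `σ` from `q` plays on the matching run.
Every compatible run of this strategy, finite and maximal or infinite, is then matched by a
compatible run of `σ`, which visits `Goal`; since `Goal` is closed under `∼`, so does the original
run. The converse follows by symmetry of `∼`. -/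

lemma lastState_cons (q : Q) (x : A × Q) (l : List (A × Q)) :
    lastState q (x :: l) = lastState x.2 l := by
  cases l <;> simp [lastState, List.getLast?_cons]

lemma validRun_append_singleton {step : Q → A → Q → Prop} {q : Q} {l : List (A × Q)}
    {x : A × Q} :
    ValidRun step q (l ++ [x]) ↔ ValidRun step q l ∧ step (lastState q l) x.1 x.2 := by
  induction l generalizing q with
  | nil => simp [ValidRun, lastState]
  | cons y l ih =>
    simp only [List.cons_append, ValidRun, ih, lastState_cons, and_assoc]

lemma finCompatible_append_singleton {Su : Set A} {σ : List (A × Q) → Option A}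
    {l : List (A × Q)} {x : A × Q} :
    FinCompatible Su σ (l ++ [x]) ↔ FinCompatible Su σ l ∧ (σ l = some x.1 ∨ x.1 ∈ Su) := by
  constructor
  · intro h
    refine ⟨fun i hi => ?_, ?_⟩
    · have := h i (by rw [List.length_append]; omega)
      simpa [List.take_append_of_le_length hi.le, List.getElem_append_left hi] using this
    · simpa using h l.length (by simp)
  · rintro ⟨h, hx⟩ i hi
    rcases (Nat.lt_or_eq_of_le (by simpa using hi : i ≤ l.length)) with hi | rfl
    · simpa [List.take_append_of_le_length hi.le, List.getElem_append_left hi] using h i hi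
    · simpa using hx

lemma ofFn_succ_eq_append {α : Type*} (ρ : ℕ → α) (n : ℕ) :
    List.ofFn (fun i : Fin (n + 1) => ρ i) = List.ofFn (fun i : Fin n => ρ i) ++ [ρ n] := by
  rw [List.ofFn_succ', List.concat_eq_append]
  simp

lemma infCompatible_iff {step : Q → A → Q → Prop} {Su : Set A} {q₀ : Q}
    {σ : List (A × Q) → Option A} {ρ : ℕ → A × Q} :
    InfCompatible step Su q₀ σ ρ ↔ ∀ n, ValidRun step q₀ (List.ofFn fun i : Fin n => ρ i) ∧
      FinCompatible Su σ (List.ofFn fun i : Fin n => ρ i) := by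
  constructor
  · rintro ⟨hstep, hσ⟩ n
    induction n with
    | zero => exact ⟨trivial, fun i h => by simp at h⟩
    | succ n ih =>
      rw [ofFn_succ_eq_append, validRun_append_singleton, finCompatible_append_singleton]
      exact ⟨⟨ih.1, hstep n⟩, ih.2, hσ n⟩
  · intro h
    have h' := fun n => h (n + 1)
    simp only [ofFn_succ_eq_append, validRun_append_singleton, finCompatible_append_singleton] at h'
    exact ⟨fun n => (h' n).1.2, fun n => (h' n).2.2⟩

lemma exists_ofFn_eq_of_prefix {α : Type*} {f : ℕ → List α} (hlen : ∀ n, (f n).length = n)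
    (hpre : ∀ n, f n <+: f (n + 1)) : ∃ ρ : ℕ → α, ∀ n, List.ofFn (fun i : Fin n => ρ i) = f n := by
  have hmono : ∀ {m n}, m ≤ n → f m <+: f n := by
    intro m n hmn
    induction n, hmn using Nat.le_induction with
    | base => exact List.prefix_refl _
    | succ n _ ih => exact ih.trans (hpre n)
  refine ⟨fun n => (f (n + 1))[n]'(by rw [hlen]; omega), fun n => ?_⟩
  refine List.ext_getElem (by simp [hlen]) fun i hi _ => ?_
  simp only [List.getElem_ofFn]
  exact (hmono (by rw [List.length_ofFn] at hi; omega)).getElem _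

section Matching

open Classical in
/-- The fallback value `p` is never reached along runs from related states. -/
noncomputable def matchingState (step : Q → A → Q → Prop) (sim : Q → Q → Prop) (s' : Q) (a : A)
    (p : Q) : Q :=
  if h : ∃ p', sim p p' ∧ step s' a p' then h.choose else p

noncomputable def matchingRun (step : Q → A → Q → Prop) (sim : Q → Q → Prop) :
    Q → List (A × Q) → List (A × Q)
  | _, [] => []
  | s', (a, p) :: l =>
    (a, matchingState step sim s' a p) :: matchingRun step sim (matchingState step sim s' a p) l

variable (step : Q → A → Q → Prop) (sim : Q → Q → Prop)

lemma length_matchingRun (s' : Q) (l : List (A × Q)) :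
    (matchingRun step sim s' l).length = l.length := by
  induction l generalizing s' with
  | nil => rfl
  | cons x l ih => simp [matchingRun, ih]

lemma map_fst_matchingRun (s' : Q) (l : List (A × Q)) :
    (matchingRun step sim s' l).map Prod.fst = l.map Prod.fst := by
  induction l generalizing s' with
  | nil => rfl
  | cons x l ih => simp [matchingRun, ih]

lemma matchingRun_take (s' : Q) (l : List (A × Q)) (n : ℕ) :
    matchingRun step sim s' (l.take n) = (matchingRun step sim s' l).take n := by
  induction l generalizing s' n with
  | nil => simp [matchingRun]
  | cons x l ih => cases n <;> simp [matchingRun, ih]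

lemma matchingRun_prefix {s' : Q} {l₁ l₂ : List (A × Q)} (h : l₁ <+: l₂) :
    matchingRun step sim s' l₁ <+: matchingRun step sim s' l₂ := by
  rw [List.prefix_iff_eq_take.1 h, matchingRun_take]
  exact List.take_prefix _ _

lemma fst_getElem_matchingRun (s' : Q) (l : List (A × Q)) (i : ℕ)
    (hi : i < (matchingRun step sim s' l).length) :
    (matchingRun step sim s' l)[i].1 = (l[i]'(by simpa [length_matchingRun] using hi)).1 := by
  have := List.getElem_of_eq (map_fst_matchingRun step sim s' l) (by simpa using hi)
  rwa [List.getElem_map, List.getElem_map] at this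

lemma finCompatible_matchingRun {Su : Set A} {σ : List (A × Q) → Option A} (s' : Q)
    (l : List (A × Q)) :
    FinCompatible Su σ (matchingRun step sim s' l) ↔
      FinCompatible Su (σ ∘ matchingRun step sim s') l := by
  simp only [FinCompatible, List.get_eq_getElem, Function.comp_apply, length_matchingRun,
    matchingRun_take, fst_getElem_matchingRun]

variable {step sim}
variable (hbisim : ∀ q₁ q₁' q₂ : Q, ∀ a : A, sim q₁ q₁' → step q₁ a q₂ →
    ∃ q₂' : Q, sim q₂ q₂' ∧ step q₁' a q₂')
include hbisim

lemma matchingState_spec {s s' p : Q} {a : A} (h : sim s s') (hp : step s a p) :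
    sim p (matchingState step sim s' a p) ∧ step s' a (matchingState step sim s' a p) := by
  have hex := hbisim s s' p a h hp
  rw [matchingState, dif_pos hex]
  exact hex.choose_spec

lemma validRun_matchingRun {s s' : Q} {l : List (A × Q)} (h : sim s s') (hl : ValidRun step s l) :
    ValidRun step s' (matchingRun step sim s' l) := by
  induction l generalizing s s' with
  | nil => trivial
  | cons x l ih =>
    obtain ⟨hstep, hl⟩ := hl
    have hx := matchingState_spec hbisim h hstep
    exact ⟨hx.2, ih hx.1 hl⟩

lemma lastState_matchingRun {s s' : Q} {l : List (A × Q)} (h : sim s s') (hl : ValidRun step s l) :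
    sim (lastState s l) (lastState s' (matchingRun step sim s' l)) := by
  induction l generalizing s s' with
  | nil => exact h
  | cons x l ih =>
    obtain ⟨hstep, hl⟩ := hl
    simp only [matchingRun, lastState_cons]
    exact ih (matchingState_spec hbisim h hstep).1 hl

lemma exists_mem_sim_of_mem_matchingRun {s s' : Q} {l : List (A × Q)} (h : sim s s')
    (hl : ValidRun step s l) {y : A × Q} (hy : y ∈ matchingRun step sim s' l) :
    ∃ x ∈ l, sim x.2 y.2 := by
  induction l generalizing s s' with
  | nil => simp [matchingRun] at hy
  | cons x l ih =>
    obtain ⟨hstep, hl⟩ := hl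
    have hx := matchingState_spec hbisim h hstep
    rcases List.mem_cons.1 hy with rfl | hy
    · exact ⟨x, List.mem_cons_self, hx.1⟩
    · obtain ⟨z, hz, hzy⟩ := ih hx.1 hl hy
      exact ⟨z, List.mem_cons_of_mem _ hz, hzy⟩

variable {q q' : Q} (h : sim q' q)
include h

lemma isStrategy_comp_matchingRun (hsymm : ∀ {x y}, sim x y → sim y x) {Sc : Set A}
    {σ : List (A × Q) → Option A} (hσ : IsStrategy step Sc q σ) :
    IsStrategy step Sc q' (σ ∘ matchingRun step sim q) := by
  intro l hl a ha
  obtain ⟨haSc, p, hp⟩ := hσ _ (validRun_matchingRun hbisim h hl) a ha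
  obtain ⟨p', -, hp'⟩ := hbisim _ _ p a (hsymm (lastState_matchingRun hbisim h hl)) hp
  exact ⟨haSc, p', hp'⟩

lemma exists_infCompatible_matching {Su : Set A} {σ : List (A × Q) → Option A}
    {ρ' : ℕ → A × Q} (hρ' : InfCompatible step Su q' (σ ∘ matchingRun step sim q) ρ') :
    ∃ ρ, InfCompatible step Su q σ ρ ∧ ∀ n, ∃ m, sim (ρ' m).2 (ρ n).2 := by
  have hpre := infCompatible_iff.1 hρ'
  obtain ⟨ρ, hρ⟩ := exists_ofFn_eq_of_prefix
    (f := fun n => matchingRun step sim q (List.ofFn fun i : Fin n => ρ' i))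
    (fun n => by simp [length_matchingRun])
    (fun n => matchingRun_prefix _ _ (ofFn_succ_eq_append ρ' n ▸ List.prefix_append _ _))
  refine ⟨ρ, infCompatible_iff.2 fun n => ?_, fun n => ?_⟩
  · rw [hρ n]
    exact ⟨validRun_matchingRun hbisim h (hpre n).1,
      (finCompatible_matchingRun step sim q _).2 (hpre n).2⟩
  · have hmem : ρ n ∈ matchingRun step sim q (List.ofFn fun i : Fin (n + 1) => ρ' i) := by
      rw [← hρ, List.mem_ofFn]
      exact ⟨Fin.last n, rfl⟩
    obtain ⟨x, hx, hxρ⟩ := exists_mem_sim_of_mem_matchingRun hbisim h (hpre (n + 1)).1 hmem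
    obtain ⟨m, rfl⟩ := List.mem_ofFn.1 hx
    exact ⟨m, hxρ⟩

lemma winningStrategy_comp_matchingRun {Goal : Set Q}
    (hGoal : ∀ x y, sim x y → y ∈ Goal → x ∈ Goal) {Su : Set A}
    {σ : List (A × Q) → Option A} (hσ : WinningStrategy step Su Goal q σ) :
    WinningStrategy step Su Goal q' (σ ∘ matchingRun step sim q) := by
  refine ⟨fun l hl hc hnone => ?_, fun ρ' hρ' => ?_⟩
  · rcases hσ.1 _ (validRun_matchingRun hbisim h hl)
      ((finCompatible_matchingRun step sim q l).2 hc) hnone with hq | ⟨y, hy, hyG⟩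
    · exact Or.inl (hGoal _ _ h hq)
    · obtain ⟨x, hx, hxy⟩ := exists_mem_sim_of_mem_matchingRun hbisim h hl hy
      exact Or.inr ⟨x, hx, hGoal _ _ hxy hyG⟩
  · obtain ⟨ρ, hρ, hsim⟩ := exists_infCompatible_matching hbisim h hρ'
    rcases hσ.2 ρ hρ with hq | ⟨n, hn⟩
    · exact Or.inl (hGoal _ _ h hq)
    · obtain ⟨m, hm⟩ := hsim n
      exact Or.inr ⟨m, hGoal _ _ hm hn⟩

end Matching

theorem bisimulation_preserves_winning_general
    (step : Q → A → Q → Prop) (Goal : Set Q) (Sc Su : Set A)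
    (sim : Q → Q → Prop) (hequiv : Equivalence sim)
    (hbisim : ∀ q₁ q₁' q₂ : Q, ∀ a : A, sim q₁ q₁' → step q₁ a q₂ →
        ∃ q₂' : Q, sim q₂ q₂' ∧ step q₁' a q₂')
    (hGoal : ∀ q q' : Q, sim q q' → (q ∈ Goal ↔ q' ∈ Goal))
    (q q' : Q) (hqq' : sim q q') :
    (∃ σ, IsStrategy step Sc q σ ∧ WinningStrategy step Su Goal q σ) ↔
    (∃ σ, IsStrategy step Sc q' σ ∧ WinningStrategy step Su Goal q' σ) := by
  have transfer : ∀ {p p' : Q}, sim p' p →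
      (∃ σ, IsStrategy step Sc p σ ∧ WinningStrategy step Su Goal p σ) →
      ∃ σ, IsStrategy step Sc p' σ ∧ WinningStrategy step Su Goal p' σ :=
    fun h ⟨σ, hσ, hwin⟩ => ⟨σ ∘ matchingRun step sim _,
      isStrategy_comp_matchingRun hbisim h hequiv.symm hσ,
      winningStrategy_comp_matchingRun hbisim h (fun x y hxy => (hGoal x y hxy).2) hwin⟩
  exact ⟨transfer (hequiv.symm hqq'), transfer hqq'⟩

/-- in a finite transition system with winning states `Goal` and actions
partitioned into controllable `Sc` and uncontrollable `Su`, if `∼` is a bisimulation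
compatible with `Goal` and `q ∼ q'`, then the controller has a winning strategy from `q`
iff it has one from `q'`. -/
theorem bisimulation_preserves_winning
    [Finite Q] [Finite A]
    (step : Q → A → Q → Prop) (Goal : Set Q) (Sc Su : Set A)
    (hpart : Sc ∪ Su = Set.univ) (hdisj : Disjoint Sc Su)
    (sim : Q → Q → Prop) (hequiv : Equivalence sim)
    (hbisim : ∀ q₁ q₁' q₂ : Q, ∀ a : A, sim q₁ q₁' → step q₁ a q₂ →
        ∃ q₂' : Q, sim q₂ q₂' ∧ step q₁' a q₂')
    (hGoal : ∀ q q' : Q, sim q q' → (q ∈ Goal ↔ q' ∈ Goal))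
    (q q' : Q) (hqq' : sim q q') :
    (∃ σ, IsStrategy step Sc q σ ∧ WinningStrategy step Su Goal q σ) ↔
    (∃ σ, IsStrategy step Sc q' σ ∧ WinningStrategy step Su Goal q' σ) :=
  bisimulation_preserves_winning_general step Goal Sc Su sim hequiv hbisim hGoal q q' hqq'

end
end

section
/- Every ordered abelian group that is o-minimal (as an ordered structure where every definable subset of M is a finite union of points and open intervals) is torsion-free and divisible; in particular, for every pair m, m' ∈ M there exists a unique y with y + y = m + m'. -/
/-- Function symbols of the language of ordered groups: `0` and `+`. -/
inductive GrpFunc : ℕ → Type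
  | zero : GrpFunc 0
  | add : GrpFunc 2

/-- Relation symbols: `<`. -/
inductive GrpRel : ℕ → Type
  | lt : GrpRel 2

/-- The first-order language `⟨+, 0, <⟩` of ordered groups. -/
def ordGrpLang : FirstOrder.Language := ⟨GrpFunc, GrpRel⟩

/-- The canonical `⟨+, 0, <⟩`-structure on an ordered abelian group. -/
noncomputable instance ordGrpStructure (M : Type*) [AddCommGroup M] [LinearOrder M] [IsOrderedAddMonoid M] :
    ordGrpLang.Structure M where
  funMap {n} f x :=
    match n, f, x with
    | _, GrpFunc.zero, _ => 0
    | _, GrpFunc.add, x => x 0 + x 1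
  RelMap {n} r x :=
    match n, r, x with
    | _, GrpRel.lt, x => x 0 < x 1

/-- `s ⊆ M` is a point or an open interval (possibly unbounded). -/
def IsPtOrOpenInterval {M : Type*} [LinearOrder M] (s : Set M) : Prop :=
  (∃ a, s = {a}) ∨ (∃ a b, s = Set.Ioo a b) ∨ (∃ a, s = Set.Ioi a) ∨
    (∃ a, s = Set.Iio a) ∨ s = Set.univ

/-! In an ordered abelian group `M` every coset `c + 2M` is definable with the parameter `c` and,
unless `M` is trivial, unbounded above. By o-minimality a definable set that is unbounded above
contains a final segment, so `2M` and `c + 2M` meet, i.e. `c ∈ 2M`. Torsion-freeness, and with it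
uniqueness of halves, holds in every linearly ordered abelian group. -/

open FirstOrder Language Set

def IsOMinimal (L : Language) (M : Type*) [L.Structure M] [LinearOrder M] : Prop :=
  ∀ s : Set M, Set.Definable (univ : Set M) L {x : Fin 1 → M | x 0 ∈ s} →
    ∃ (n : ℕ) (f : Fin n → Set M), (∀ i, IsPtOrOpenInterval (f i)) ∧ s = ⋃ i, f i

section Order

variable {M : Type*} [LinearOrder M] [Nonempty M]

lemma IsPtOrOpenInterval.exists_Ioi_subset_or_bddAbove {s : Set M} (h : IsPtOrOpenInterval s) :
    (∃ a, Ioi a ⊆ s) ∨ BddAbove s := by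
  rcases h with ⟨a, rfl⟩ | ⟨a, b, rfl⟩ | ⟨a, rfl⟩ | ⟨a, rfl⟩ | rfl
  · exact .inr bddAbove_singleton
  · exact .inr bddAbove_Ioo
  · exact .inl ⟨a, subset_rfl⟩
  · exact .inr bddAbove_Iio
  · exact .inl ⟨Classical.arbitrary M, subset_univ _⟩

lemma exists_Ioi_subset_iUnion_of_not_bddAbove {ι : Type*} [Finite ι] {f : ι → Set M}
    (hf : ∀ i, IsPtOrOpenInterval (f i)) (hunbdd : ¬BddAbove (⋃ i, f i)) :
    ∃ a, Ioi a ⊆ ⋃ i, f i := by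
  obtain ⟨i, hi⟩ : ∃ i, ¬BddAbove (f i) := by
    contrapose! hunbdd
    simpa using (finite_univ (α := ι)).bddAbove_biUnion.mpr fun i _ ↦ hunbdd i
  obtain ⟨a, ha⟩ := (hf i).exists_Ioi_subset_or_bddAbove.resolve_right hi
  exact ⟨a, ha.trans (subset_iUnion f i)⟩

lemma IsOMinimal.exists_Ioi_subset {L : Language} [L.Structure M] (homin : IsOMinimal L M)
    {s : Set M} (hdef : Set.Definable univ L {x : Fin 1 → M | x 0 ∈ s}) (hunbdd : ¬BddAbove s) :
    ∃ a, Ioi a ⊆ s := by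
  obtain ⟨n, f, hf, rfl⟩ := homin s hdef
  exact exists_Ioi_subset_iUnion_of_not_bddAbove hf hunbdd

end Order

section OrderedGroup

variable {M : Type*} [AddCommGroup M] [LinearOrder M] [IsOrderedAddMonoid M]

def addTerm {α : Type*} (t s : ordGrpLang.Term α) : ordGrpLang.Term α :=
  Functions.apply₂ (GrpFunc.add : ordGrpLang.Functions 2) t s

@[simp]
lemma realize_addTerm {α : Type*} (v : α → M) (t s : ordGrpLang.Term α) :
    (addTerm t s).realize v = t.realize v + s.realize v := rfl

lemma definable_setOf_even_sub (c : M) :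
    Set.Definable univ ordGrpLang {x : Fin 1 → M | x 0 ∈ {y | Even (y - c)}} := by
  rw [Set.definable_iff_exists_formula_sum]
  -- `∃ y, x = y + y + c`, with `x` the free variable and `c` a parameter
  refine ⟨∃' (Term.var (.inl (.inr 0)) =' addTerm (addTerm (&0) (&0))
    (Term.var (.inl (.inl ⟨c, mem_univ c⟩)))), ?_⟩
  ext v
  simp [Formula.Realize, Even, sub_eq_iff_eq_add, Fin.snoc]

lemma not_bddAbove_setOf_even_sub [Nontrivial M] (c : M) : ¬BddAbove {x : M | Even (x - c)} := by
  refine not_bddAbove_iff.mpr fun a ↦ ?_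
  obtain ⟨b, hb⟩ := exists_gt (max (a - c) 0)
  refine ⟨b + b + c, ⟨b, add_sub_cancel_right _ _⟩, ?_⟩
  have hb_pos : 0 < b := (le_max_right _ _).trans_lt hb
  have hab : a - c < b + b := ((le_max_left _ _).trans_lt hb).trans (lt_add_of_pos_left b hb_pos)
  exact sub_lt_iff_lt_add.mp hab

lemma IsOMinimal.even (homin : IsOMinimal ordGrpLang M) (c : M) : Even c := by
  rcases subsingleton_or_nontrivial M with hM | hM
  · exact ⟨0, Subsingleton.elim _ _⟩
  obtain ⟨a, ha⟩ := homin.exists_Ioi_subset (definable_setOf_even_sub c)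
    (not_bddAbove_setOf_even_sub c)
  have hevens : ¬BddAbove {x : M | Even x} := by simpa using not_bddAbove_setOf_even_sub (0 : M)
  obtain ⟨x, ⟨r, hr⟩, hax⟩ := not_bddAbove_iff.mp hevens a
  obtain ⟨s, hs⟩ := ha hax
  exact ⟨r - s, by rw [← sub_sub_cancel x c, hs, hr]; abel⟩

end OrderedGroup

/-- every o-minimal ordered abelian group (every subset of `M` definable
with parameters is a finite union of points and open intervals) is torsion-free and
divisible; in particular for all `m, m'` there is a unique `y` with `y + y = m + m'`. -/
theorem omin_ordered_group_divisible_torsionfree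
    (M : Type*) [AddCommGroup M] [LinearOrder M] [IsOrderedAddMonoid M]
    (homin : ∀ s : Set M,
      Set.Definable (Set.univ : Set M) ordGrpLang {x : Fin 1 → M | x 0 ∈ s} →
      ∃ (n : ℕ) (f : Fin n → Set M), (∀ i, IsPtOrOpenInterval (f i)) ∧ s = ⋃ i, f i) :
    (∀ (x : M) (n : ℕ), n ≠ 0 → n • x = 0 → x = 0) ∧
    (∀ m m' : M, ∃! y : M, y + y = m + m') := by
  refine ⟨fun x n hn ↦ (nsmul_eq_zero_iff_right hn).mp, fun m m' ↦ ?_⟩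
  obtain ⟨y, hy⟩ := IsOMinimal.even homin (m + m')
  refine ⟨y, hy.symm, fun z hz ↦ nsmul_right_injective two_ne_zero ?_⟩
  simp only [two_nsmul, hz, hy]
end

section
/- Counterexample to adequacy of time-abstract bisimulation for games: consider the state space ℝ≥0 × {0,1} with dynamics γ(x₁, x₂, t) = (x₁ + t, x₂), and the partition into A = [0,1) × {0,1}, and for x₂ = 0: B-pieces ⋃_{k≥1} [2k, 2k+1) × {0} and C-pieces ⋃_{k≥0} [2k+1, 2k+2) × {0}, while for x₂ = 1 the roles of B and C are swapped. Then the equivalence relation identifying points in the same piece (A, B, or C) is a time-abstract bisimulation for the flow: if y ∼ y' and y can reach piece P after some delay, then y' can reach piece P after some (possibly different) delay. -/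
/-! Piece A is left only forwards in time, so two points of A stay together while the delay
keeps the first one in A; pieces B and C alternate on consecutive unit intervals, so each of
them is reached from every point by a delay ending at a suitable integer. -/

/-- The piece of point `(x₁, x₂)` (with `x₂ ∈ {0,1}`): `0` (= A) if `x₁ < 1`;
`1` (= B) if `x₁ ≥ 1` and `⌊x₁⌋ + x₂` is even; `2` (= C) otherwise. -/
noncomputable def piece (x₁ : ℝ) (x₂ : ℤ) : ℕ :=
  if x₁ < 1 then 0 else if Even (⌊x₁⌋ + x₂) then 1 else 2

lemma piece_eq_zero_iff {x₁ : ℝ} {x₂ : ℤ} : piece x₁ x₂ = 0 ↔ x₁ < 1 := by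
  unfold piece
  split_ifs <;> simp_all

lemma piece_of_one_le {x₁ : ℝ} (x₂ : ℤ) (h : 1 ≤ x₁) :
    piece x₁ x₂ = if Even (⌊x₁⌋ + x₂) then 1 else 2 :=
  if_neg h.not_gt

lemma exists_ge_even_add_iff (m c : ℤ) (P : Prop) : ∃ n ≥ m, (Even (n + c) ↔ P) := by
  by_cases h : Even (m + c) ↔ P
  · exact ⟨m, le_rfl, h⟩
  · refine ⟨m + 1, by omega, ?_⟩
    rw [add_right_comm, Int.even_add_one]
    tauto

lemma exists_nonneg_piece_add_eq_of_one_le (y : ℝ) (c : ℤ) {z : ℝ} (d : ℤ) (hz : 1 ≤ z) :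
    ∃ τ : ℝ, 0 ≤ τ ∧ piece (y + τ) c = piece z d := by
  obtain ⟨n, hn, hparity⟩ := exists_ge_even_add_iff (max ⌈y⌉ 1) c (Even (⌊z⌋ + d))
  have hyn : y ≤ n := (Int.le_ceil y).trans (by exact_mod_cast (le_max_left _ _).trans hn)
  have hn1 : (1 : ℝ) ≤ n := by exact_mod_cast (le_max_right _ _).trans hn
  refine ⟨n - y, sub_nonneg.2 hyn, ?_⟩
  rw [add_sub_cancel, piece_of_one_le c hn1, piece_of_one_le d hz, Int.floor_intCast]
  exact if_congr hparity rfl rfl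

theorem piece_partition_time_abstract_bisim_general
    (y₁ y₁' : ℝ) (y₂ y₂' : ℤ)
    (hsame : piece y₁ y₂ = piece y₁' y₂') :
    ∀ τ : ℝ, 0 ≤ τ → ∃ τ' : ℝ, 0 ≤ τ' ∧ piece (y₁ + τ) y₂ = piece (y₁' + τ') y₂' := by
  intro τ hτ
  by_cases hA : y₁ + τ < 1
  · refine ⟨0, le_rfl, ?_⟩
    rw [add_zero, ← hsame, piece_eq_zero_iff.2 hA, piece_eq_zero_iff.2 (by linarith)]
  · obtain ⟨τ', hτ', h⟩ := exists_nonneg_piece_add_eq_of_one_le y₁' y₂' y₂ (not_lt.1 hA)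
    exact ⟨τ', hτ', h.symm⟩

/-- the equivalence identifying points in the same piece (A, B or C) is a
time-abstract bisimulation for the flow `(x₁,x₂) + (τ,0)`: for any two points in the same
piece and any delay `τ ≥ 0`, there is a delay `τ' ≥ 0` reaching the same piece. -/
theorem piece_partition_time_abstract_bisim
    (y₁ y₁' : ℝ) (y₂ y₂' : ℤ)
    (hy₁ : 0 ≤ y₁) (hy₁' : 0 ≤ y₁')
    (hy₂ : y₂ = 0 ∨ y₂ = 1) (hy₂' : y₂' = 0 ∨ y₂' = 1)
    (hsame : piece y₁ y₂ = piece y₁' y₂') :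
    ∀ τ : ℝ, 0 ≤ τ → ∃ τ' : ℝ, 0 ≤ τ' ∧ piece (y₁ + τ) y₂ = piece (y₁' + τ') y₂' :=
  piece_partition_time_abstract_bisim_general y₁ y₁' y₂ y₂' hsame
end

section
/- Suffix and superword abstractions are incomparable: there exist a finite set P = {A, B, C}, and three 'branching points' y₁, y₂, y₃ each with two outgoing trajectories encoded as words over P, such that the superword abstractions satisfy Sup(y₁) = Sup(y₂) ≠ Sup(y₃) while the suffix abstractions (sets of trajectory words) satisfy Suf(y₁) = Suf(y₃) ≠ Suf(y₂). Concretely: y₁ has trajectories with words ABCB and ACBC where the pieces alternate synchronously in time (B and C occupy the same time intervals in opposite order), y₂ has trajectories AB and AC, and y₃ has trajectories ABCB and ACBC with time-shifted alternation; then Suf(y₁) = Suf(y₃) = {ABCB, ACBC}, Suf(y₂) = {AB, AC}, Sup(y₁) = Sup(y₂) = {A}{B,C}, and Sup(y₃) = {A}{B,C}{B}{B,C}{C}{B,C}. -/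
/-- The three pieces `A`, `B`, `C`. -/
notation "Pc" => Fin 3

def pA : Pc := 0
def pB : Pc := 1
def pC : Pc := 2

/-- `RepWord f w`: the (reduced) word of the piecewise-constant function
`f : ℝ≥0 → α` is `w`: adjacent letters of `w` are distinct, and there are breakpoints
`0 = b 0 < b 1 < … ` such that `f` equals the `i`-th letter of `w` on `[b i, b (i+1))`
(and on `[b (last), ∞)` for the last letter). -/
def RepWord {α : Type*} (f : ℝ → α) (w : List α) : Prop :=
  w ≠ [] ∧ w.Chain' (· ≠ ·) ∧
  ∃ b : ℕ → ℝ, b 0 = 0 ∧ (∀ i : ℕ, i + 1 < w.length → b i < b (i + 1)) ∧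
    ∀ i : ℕ, ∀ h : i < w.length, ∀ τ : ℝ, b i ≤ τ →
      (i + 1 = w.length ∨ τ < b (i + 1)) → f τ = w.get ⟨i, h⟩

/-- first trajectory of `y₁` (and of `y₃`): `A` on `[0,1)`, `B` on `[1,2)`, `C` on
`[2,3)`, `B` on `[3,∞)`. -/
noncomputable def f₁ (τ : ℝ) : Pc :=
  if τ < 1 then pA else if τ < 2 then pB else if τ < 3 then pC else pB

/-- second trajectory of `y₁`: `A`, then `C`, `B`, `C` synchronously with `f₁`. -/
noncomputable def g₁ (τ : ℝ) : Pc :=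
  if τ < 1 then pA else if τ < 2 then pC else if τ < 3 then pB else pC

/-- trajectories of `y₂`. -/
noncomputable def f₂ (τ : ℝ) : Pc := if τ < 1 then pA else pB
noncomputable def g₂ (τ : ℝ) : Pc := if τ < 1 then pA else pC

/-- second trajectory of `y₃`: time-shifted alternation `A`, `C` on `[1,3/2)`, `B` on
`[3/2,5/2)`, `C` on `[5/2,∞)`. -/
noncomputable def g₃ (τ : ℝ) : Pc :=
  if τ < 1 then pA else if τ < 3/2 then pC else if τ < 5/2 then pB else pC

/-!
Both abstractions forget something different. The suffix abstraction keeps each trajectory's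
word but forgets how the two trajectories are aligned in time, so the time-shifted `y₃` looks
like `y₁`. The superword abstraction keeps the alignment but forgets which trajectory is where:
after time `1` both `y₁` and `y₂` occupy exactly `{B, C}` at every moment, whereas desynchronising
`g₁` into `g₃` creates the intervals where both trajectories sit in `B`, or both in `C`.
-/

def RepWordFrom {α : Type*} (s : ℝ) (f : ℝ → α) (w : List α) : Prop :=
  w ≠ [] ∧ w.IsChain (· ≠ ·) ∧
  ∃ b : ℕ → ℝ, b 0 = s ∧ (∀ i : ℕ, i + 1 < w.length → b i < b (i + 1)) ∧
    ∀ i : ℕ, ∀ h : i < w.length, ∀ τ : ℝ, b i ≤ τ →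
      (i + 1 = w.length ∨ τ < b (i + 1)) → f τ = w.get ⟨i, h⟩

namespace RepWordFrom

variable {α : Type*} {s t : ℝ} {g : ℝ → α} {a x : α} {w : List α}

theorem repWord {f : ℝ → α} (hf : RepWordFrom 0 f w) : RepWord f w := hf

theorem const (s : ℝ) (a : α) : RepWordFrom s (fun _ => a) [a] :=
  ⟨List.cons_ne_nil _ _, .singleton a, fun _ => s, rfl, fun _ hi => by simp at hi,
    fun _ _ _ _ _ => by simp⟩

theorem ite (hst : s < t) (hax : a ≠ x) (hg : RepWordFrom t g (x :: w)) :
    RepWordFrom s (fun τ => if τ < t then a else g τ) (a :: x :: w) := by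
  obtain ⟨-, hchain, b, hb0, hb_lt, hg_eq⟩ := hg
  have hb_ge : ∀ i, i < (x :: w).length → t ≤ b i := by
    intro i
    induction i with
    | zero => exact fun _ => hb0.ge
    | succ i ih => exact fun hi => (ih (by omega)).trans (hb_lt i hi).le
  refine ⟨List.cons_ne_nil _ _, hchain.cons_cons hax, fun | 0 => s | i + 1 => b i, rfl, ?_, ?_⟩
  · rintro (_ | i) hi
    · show s < b 0
      exact hb0 ▸ hst
    · exact hb_lt i (by simpa using hi)
  · rintro (_ | i) hi τ hτ hτ'
    · have : τ < t := by simpa [hb0] using hτ'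
      simp [this]
    · have hi' : i < (x :: w).length := by simpa using hi
      simp only [not_lt.2 ((hb_ge i hi').trans hτ), if_false]
      exact hg_eq i hi' τ hτ (by simpa using hτ')

end RepWordFrom

theorem Set.pair_ne_singleton {α : Type*} {a b c : α} (hbc : b ≠ c) :
    ({b, c} : Set α) ≠ {a} := by
  intro h
  have hb : b ∈ ({a} : Set α) := h ▸ Set.mem_insert b {c}
  have hc : c ∈ ({a} : Set α) := h ▸ Set.mem_insert_of_mem b rfl
  exact hbc (hb.trans hc.symm)

theorem pB_ne_pC : pB ≠ pC := by decide

theorem repWord_f₁ : RepWord f₁ [pA, pB, pC, pB] :=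
  RepWordFrom.repWord <| .ite (by norm_num) (by decide) <| .ite (by norm_num) (by decide) <|
    .ite (by norm_num) (by decide) <| .const _ _

theorem repWord_g₁ : RepWord g₁ [pA, pC, pB, pC] :=
  RepWordFrom.repWord <| .ite (by norm_num) (by decide) <| .ite (by norm_num) (by decide) <|
    .ite (by norm_num) (by decide) <| .const _ _

theorem repWord_f₂ : RepWord f₂ [pA, pB] :=
  RepWordFrom.repWord <| .ite (by norm_num) (by decide) <| .const _ _

theorem repWord_g₂ : RepWord g₂ [pA, pC] :=
  RepWordFrom.repWord <| .ite (by norm_num) (by decide) <| .const _ _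

theorem repWord_g₃ : RepWord g₃ [pA, pC, pB, pC] :=
  RepWordFrom.repWord <| .ite (by norm_num) (by decide) <| .ite (by norm_num) (by decide) <|
    .ite (by norm_num) (by decide) <| .const _ _

theorem pair_f₁_g₁_eq :
    (fun τ => ({f₁ τ, g₁ τ} : Set Pc)) = fun τ => if τ < 1 then {pA} else {pB, pC} := by
  funext τ
  unfold f₁ g₁
  split_ifs <;> first | rfl | exact Set.pair_eq_singleton _ | exact Set.pair_comm _ _

theorem pair_f₂_g₂_eq :
    (fun τ => ({f₂ τ, g₂ τ} : Set Pc)) = fun τ => if τ < 1 then {pA} else {pB, pC} := by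
  funext τ
  unfold f₂ g₂
  split_ifs <;> first | rfl | exact Set.pair_eq_singleton _

theorem pair_f₁_g₃_eq : (fun τ => ({f₁ τ, g₃ τ} : Set Pc)) = fun τ =>
    if τ < 1 then {pA} else if τ < 3/2 then {pB, pC} else if τ < 2 then {pB} else
      if τ < 5/2 then {pB, pC} else if τ < 3 then {pC} else {pB, pC} := by
  funext τ
  unfold f₁ g₃
  split_ifs <;>
    first | rfl | exact Set.pair_eq_singleton _ | exact Set.pair_comm _ _ | (exfalso; linarith)

theorem repWord_A_then_BC :
    RepWord (fun τ => if τ < 1 then ({pA} : Set Pc) else {pB, pC}) [{pA}, {pB, pC}] :=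
  RepWordFrom.repWord <| .ite (by norm_num) (Set.pair_ne_singleton pB_ne_pC).symm <| .const _ _

theorem repWord_pair_f₁_g₃ : RepWord (fun τ => ({f₁ τ, g₃ τ} : Set Pc))
    [{pA}, {pB, pC}, {pB}, {pB, pC}, {pC}, {pB, pC}] := by
  have hBC_A := Set.pair_ne_singleton (a := pA) pB_ne_pC
  have hBC_B := Set.pair_ne_singleton (a := pB) pB_ne_pC
  have hBC_C := Set.pair_ne_singleton (a := pC) pB_ne_pC
  rw [pair_f₁_g₃_eq]
  exact RepWordFrom.repWord <| .ite (by norm_num) hBC_A.symm <| .ite (by norm_num) hBC_B <|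
    .ite (by norm_num) hBC_B.symm <| .ite (by norm_num) hBC_C <| .ite (by norm_num) hBC_C.symm <|
    .const _ _

/-- the suffix and superword abstractions are incomparable.  With the
branching points `y₁ = (f₁, g₁)`, `y₂ = (f₂, g₂)`, `y₃ = (f₁, g₃)`: the suffix
abstractions (sets of reduced trajectory words) satisfy
`Suf(y₁) = Suf(y₃) = {ABCB, ACBC} ≠ {AB, AC} = Suf(y₂)`, while the superword
abstractions (reduced word of `τ ↦ {f τ, g τ}`) satisfy
`Sup(y₁) = Sup(y₂) = {A}{B,C} ≠ {A}{B,C}{B}{B,C}{C}{B,C} = Sup(y₃)`. -/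
theorem suffix_superword_incomparable :
    -- suffix abstractions
    RepWord f₁ [pA, pB, pC, pB] ∧ RepWord g₁ [pA, pC, pB, pC] ∧
    RepWord f₂ [pA, pB] ∧ RepWord g₂ [pA, pC] ∧ RepWord g₃ [pA, pC, pB, pC] ∧
    -- Suf(y₁) = Suf(y₃) ≠ Suf(y₂)
    ({[pA, pB, pC, pB], [pA, pC, pB, pC]} : Set (List Pc))
        ≠ {[pA, pB], [pA, pC]} ∧
    -- superword abstractions
    RepWord (fun τ => ({f₁ τ, g₁ τ} : Set Pc)) [{pA}, {pB, pC}] ∧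
    RepWord (fun τ => ({f₂ τ, g₂ τ} : Set Pc)) [{pA}, {pB, pC}] ∧
    RepWord (fun τ => ({f₁ τ, g₃ τ} : Set Pc))
        [{pA}, {pB, pC}, {pB}, {pB, pC}, {pC}, {pB, pC}] ∧
    -- Sup(y₁) = Sup(y₂) ≠ Sup(y₃)
    ([{pA}, {pB, pC}] : List (Set Pc))
        ≠ [{pA}, {pB, pC}, {pB}, {pB, pC}, {pC}, {pB, pC}] := by
  have suf_ne : ({[pA, pB, pC, pB], [pA, pC, pB, pC]} : Set (List Pc))
      ≠ {[pA, pB], [pA, pC]} := by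
    intro h
    have := h ▸ Set.mem_insert [pA, pB, pC, pB] {[pA, pC, pB, pC]}
    simp at this
  refine ⟨repWord_f₁, repWord_g₁, repWord_f₂, repWord_g₂, repWord_g₃, suf_ne, ?_, ?_,
    repWord_pair_f₁_g₃, by simp⟩
  · exact pair_f₁_g₁_eq ▸ repWord_A_then_BC
  · exact pair_f₂_g₂_eq ▸ repWord_A_then_BC
end

section
/- Compatibility of partitions with strong resets: let A be a game with transitions (q, g, a, R, q') where each reset R is a constant set (R ⊆ V₂ independent of the source point). Let P be any partition of Q × V₂ refining the partition generated by all guards and resets (i.e., each guard g and each reset set R is a union of pieces of P restricted to the relevant location). Then P is stable under Pred_a for every action a: for any union W of pieces of P, Pred_a(W) is a union of pieces of P. -/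
section

variable {Q V2 A : Type*}

/-- Discrete step of an automaton with strong (constant-set) resets: `(q,y) →ᵃ (q',y')`
iff there is a transition `(q, g, a, R, q')` with `y ∈ g` and `y' ∈ R`. -/
def StrongResetStep (trans : Set (Q × Set V2 × A × Set V2 × Q)) (a : A)
    (s s' : Q × V2) : Prop :=
  ∃ t ∈ trans, t.1 = s.1 ∧ t.2.2.1 = a ∧ s.2 ∈ t.2.1 ∧ s'.2 ∈ t.2.2.2.1 ∧ t.2.2.2.2 = s'.1

/-- `Pred_a(W)`: states where `a` is enabled and every `a`-successor lies in `W`. -/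
def PredA (trans : Set (Q × Set V2 × A × Set V2 × Q)) (a : A)
    (W : Set (Q × V2)) : Set (Q × V2) :=
  {s | (∃ s', StrongResetStep trans a s s') ∧
       ∀ s', StrongResetStep trans a s s' → s' ∈ W}

theorem PredA.mem_congr {trans : Set (Q × Set V2 × A × Set V2 × Q)} {a : A}
    {W : Set (Q × V2)} {s₁ s₂ : Q × V2}
    (h : ∀ s', StrongResetStep trans a s₁ s' ↔ StrongResetStep trans a s₂ s') :
    s₁ ∈ PredA trans a W ↔ s₂ ∈ PredA trans a W :=
  and_congr (exists_congr h) (forall_congr' fun s' => imp_congr_left (h s'))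

/-- Since resets are constant sets, the source valuation enters a step only through its
guard. -/
theorem StrongResetStep.congr_source {trans : Set (Q × Set V2 × A × Set V2 × Q)} {a : A}
    {q : Q} {y₁ y₂ : V2} (hguards : ∀ t ∈ trans, (y₁ ∈ t.2.1 ↔ y₂ ∈ t.2.1)) (s' : Q × V2) :
    StrongResetStep trans a (q, y₁) s' ↔ StrongResetStep trans a (q, y₂) s' :=
  exists_congr fun t => and_congr_right fun ht =>
    and_congr_right' <| and_congr_right' <| and_congr_left' (hguards t ht)

/-- with strong resets, membership in `Pred_a(W)` only depends on which
guards the point satisfies: if `y₁, y₂` (at the same location `q`) belong to exactly the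
same guards of the automaton — as is the case when they lie in the same piece of a
partition refining the partition generated by guards and resets — then
`(q,y₁) ∈ Pred_a(W) ↔ (q,y₂) ∈ Pred_a(W)`, for every `W`.  Hence any such partition is
stable under `Pred_a` for every action `a`. -/
theorem strong_reset_pred_stable
    (trans : Set (Q × Set V2 × A × Set V2 × Q)) (a : A) (W : Set (Q × V2))
    (q : Q) (y₁ y₂ : V2)
    (hguards : ∀ t ∈ trans, (y₁ ∈ t.2.1 ↔ y₂ ∈ t.2.1)) :
    (q, y₁) ∈ PredA trans a W ↔ (q, y₂) ∈ PredA trans a W :=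
  PredA.mem_congr (StrongResetStep.congr_source hguards)

end
end
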